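/- Let α₁, β₁, α₂, β₂ > 0, λ ∈ ℝ, and let s > 0 be a real number. Then ∫₀^∞ e^{−st} · (∑_{k=0}^∞ (− ψ(α₂k+β₂)) · λ^k · t^{α₁k+β₁−1} / (Γ(α₁k+β₁) · Γ(α₂k+β₂))) dt = − (1/s^{β₁}) · ∑_{k=0}^∞ (ψ(α₂k+β₂) / Γ(α₂k+β₂)) · (λ · s^{−α₁})^k. (The integrand series is the term-by-term derivative with respect to β₂ of t^{β₁−1} E_{(α₁,β₁),(α₂,β₂)}(λ t^{α₁}).) -/

import Mathlib

/-!
Since `ψ = (log Γ)'` and `log Γ` is convex on `(0, ∞)`, `ψ x` lies between the slopes of `log Γ`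
on `[x - 1, x]` and on `[x, x + a]`. This gives `log (x - 1) ≤ ψ x ≤ log x`, hence `|ψ x| ≤ x`,
and `Γ (x + a) ≥ Γ x · (x - 1) ^ a`, so that `x · r ^ k / Γ x` along `x = α k + β` passes the
ratio test for every `r`. The series of Laplace transforms of the absolute values of the terms
therefore converges, the integral can be taken term by term, and
`∫₀^∞ e^{-st} t^{a-1} dt = Γ(a) / s^a`.
-/

open Real MeasureTheory

/-- The digamma function `ψ(x) = the logarithmic derivative of Γ`, i.e. the derivative of `log ∘ Γ`. -/
noncomputable def digamma (x : ℝ) : ℝ := deriv (fun y : ℝ => Real.log (Real.Gamma y)) x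

open Set Filter

lemma differentiableAt_log_Gamma {x : ℝ} (hx : 0 < x) :
    DifferentiableAt ℝ (fun y => log (Gamma y)) x :=
  (differentiableAt_Gamma fun m => by linarith [(m.cast_nonneg : (0 : ℝ) ≤ m)]).log
    (Gamma_pos_of_pos hx).ne'

lemma digamma_le_slope_log_Gamma {x y : ℝ} (hx : 0 < x) (hxy : x < y) :
    digamma x ≤ (log (Gamma y) - log (Gamma x)) / (y - x) :=
  (convexOn_log_Gamma.deriv_le_slope hx (hx.trans hxy) hxy
    (differentiableAt_log_Gamma hx)).trans_eq (slope_def_field _ _ _)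

lemma slope_log_Gamma_le_digamma {x y : ℝ} (hy : 0 < y) (hyx : y < x) :
    (log (Gamma x) - log (Gamma y)) / (x - y) ≤ digamma x :=
  (slope_def_field _ _ _).symm.trans_le (convexOn_log_Gamma.slope_le_deriv hy (hy.trans hyx) hyx
    (differentiableAt_log_Gamma (hy.trans hyx)))

lemma log_Gamma_add_one {x : ℝ} (hx : 0 < x) : log (Gamma (x + 1)) = log (Gamma x) + log x := by
  rw [Gamma_add_one hx.ne', log_mul hx.ne' (Gamma_pos_of_pos hx).ne', add_comm]

lemma digamma_le_log {x : ℝ} (hx : 0 < x) : digamma x ≤ log x := by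
  simpa [log_Gamma_add_one hx] using digamma_le_slope_log_Gamma hx (lt_add_one x)

lemma log_sub_one_le_digamma {x : ℝ} (hx : 1 < x) : log (x - 1) ≤ digamma x := by
  have h := slope_log_Gamma_le_digamma (sub_pos.mpr hx) (sub_one_lt x)
  have hrec := log_Gamma_add_one (sub_pos.mpr hx)
  rw [sub_add_cancel] at hrec
  rwa [hrec, sub_sub_cancel, div_one, add_sub_cancel_left] at h

lemma abs_digamma_le_self {x : ℝ} (hx : 2 ≤ x) : |digamma x| ≤ x := by
  rw [abs_le]
  constructor
  · linarith [log_sub_one_le_digamma (by linarith : 1 < x), log_nonneg (by linarith : 1 ≤ x - 1)]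
  · linarith [digamma_le_log (by linarith : 0 < x), log_le_sub_one_of_pos (by linarith : 0 < x)]

lemma Gamma_mul_rpow_le_Gamma_add {x a : ℝ} (hx : 1 < x) (ha : 0 < a) :
    Gamma x * (x - 1) ^ a ≤ Gamma (x + a) := by
  have hx₀ : 0 < x := one_pos.trans hx
  have hslope := (log_sub_one_le_digamma hx).trans
    (digamma_le_slope_log_Gamma hx₀ (lt_add_of_pos_right x ha))
  rw [add_sub_cancel_left, le_div_iff₀ ha] at hslope
  rw [← log_le_log_iff (by positivity) (Gamma_pos_of_pos (by linarith)),
    log_mul (Gamma_pos_of_pos hx₀).ne' (by positivity), log_rpow (sub_pos.mpr hx)]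
  linarith

lemma mul_pow_div_Gamma_add_le {x a r : ℝ} (hx : 2 ≤ x) (ha : 0 < a) (hax : a ≤ x)
    (hr : 4 * |r| ≤ (x - 1) ^ a) (k : ℕ) :
    (x + a) * |r| ^ (k + 1) / Gamma (x + a) ≤ 1 / 2 * (x * |r| ^ k / Gamma x) := by
  have hP : 0 < (x - 1) ^ a := rpow_pos_of_pos (by linarith) a
  calc (x + a) * |r| ^ (k + 1) / Gamma (x + a)
      ≤ (x + a) * |r| ^ (k + 1) / (Gamma x * (x - 1) ^ a) := by
        gcongr
        exact Gamma_mul_rpow_le_Gamma_add (by linarith) ha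
    _ = ((x + a) * |r|) * (|r| ^ k / (Gamma x * (x - 1) ^ a)) := by ring
    _ ≤ (1 / 2 * (x * (x - 1) ^ a)) * (|r| ^ k / (Gamma x * (x - 1) ^ a)) := by
        gcongr ?_ * _
        nlinarith [abs_nonneg r]
    _ = 1 / 2 * (x * |r| ^ k / Gamma x) := by field_simp

lemma tendsto_mul_natCast_add_atTop {α : ℝ} (hα : 0 < α) (β : ℝ) :
    Tendsto (fun k : ℕ => α * k + β) atTop atTop :=
  tendsto_atTop_add_const_right _ _ (tendsto_natCast_atTop_atTop.const_mul_atTop hα)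

lemma summable_mul_pow_div_Gamma {α : ℝ} (hα : 0 < α) (β r : ℝ) :
    Summable fun k : ℕ => (α * k + β) * r ^ k / Gamma (α * k + β) := by
  have hlin := tendsto_mul_natCast_add_atTop hα β
  have hpow : Tendsto (fun k : ℕ => (α * k + β - 1) ^ α) atTop atTop :=
    (tendsto_rpow_atTop hα).comp (tendsto_atTop_add_const_right _ _ hlin)
  refine summable_of_ratio_norm_eventually_le one_half_lt_one ?_
  filter_upwards [hlin.eventually_ge_atTop 2, hlin.eventually_ge_atTop α,
    hpow.eventually_ge_atTop (4 * |r|)] with k h2 hα' hr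
  have hnorm : ∀ x : ℝ, 0 < x → ∀ n : ℕ, ‖x * r ^ n / Gamma x‖ = x * |r| ^ n / Gamma x :=
    fun x hx n => by
      rw [Real.norm_eq_abs, abs_div, abs_mul, abs_pow, abs_of_pos hx,
        abs_of_pos (Gamma_pos_of_pos hx)]
  have hsucc : α * ((k + 1 : ℕ) : ℝ) + β = (α * k + β) + α := by push_cast; ring
  rw [hsucc, hnorm _ (by linarith), hnorm _ (by linarith)]
  exact mul_pow_div_Gamma_add_le h2 hα hα' hr k

lemma summable_digamma_div_Gamma_mul_pow {α : ℝ} (hα : 0 < α) (β r : ℝ) :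
    Summable fun k : ℕ => digamma (α * k + β) / Gamma (α * k + β) * r ^ k := by
  refine (summable_mul_pow_div_Gamma hα β |r|).of_norm_bounded_eventually_nat ?_
  filter_upwards [(tendsto_mul_natCast_add_atTop hα β).eventually_ge_atTop 2] with k h2
  have hΓ : 0 < Gamma (α * k + β) := Gamma_pos_of_pos (by linarith)
  rw [Real.norm_eq_abs, abs_mul, abs_div, abs_of_pos hΓ, abs_pow, div_mul_eq_mul_div]
  gcongr
  exact abs_digamma_le_self h2

lemma integral_exp_neg_mul_tsum_rpow {s : ℝ} (hs : 0 < s) {a c : ℕ → ℝ} (ha : ∀ k, 0 < a k)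
    (hsum : Summable fun k => |c k| * ((1 / s) ^ a k * Gamma (a k))) :
    ∫ t in Ioi 0, exp (-(s * t)) * ∑' k, c k * t ^ (a k - 1) =
      ∑' k, c k * ((1 / s) ^ a k * Gamma (a k)) := by
  set F : ℕ → ℝ → ℝ := fun k t => c k * (t ^ (a k - 1) * exp (-(s * t)))
  have hlaplace (k : ℕ) : ∫ t in Ioi 0, t ^ (a k - 1) * exp (-(s * t)) =
      (1 / s) ^ a k * Gamma (a k) :=
    integral_rpow_mul_exp_neg_mul_Ioi (ha k) hs
  -- the Laplace integral of `t ^ (a - 1)` is `Γ(a) / s ^ a ≠ 0`, so the integrand is integrable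
  have hint (k : ℕ) : Integrable (F k) (volume.restrict (Ioi 0)) :=
    (Integrable.of_integral_ne_zero (by rw [hlaplace]; have := ha k; positivity)).const_mul _
  have hnorm (k : ℕ) : ∫ t in Ioi 0, ‖F k t‖ = |c k| * ((1 / s) ^ a k * Gamma (a k)) := by
    rw [← hlaplace, ← integral_const_mul]
    refine setIntegral_congr_fun measurableSet_Ioi fun t (ht : 0 < t) => ?_
    rw [Real.norm_eq_abs, abs_mul, abs_of_pos (by positivity : 0 < t ^ (a k - 1) * exp (-(s * t)))]
  calc ∫ t in Ioi 0, exp (-(s * t)) * ∑' k, c k * t ^ (a k - 1)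
      = ∫ t in Ioi 0, ∑' k, F k t := by
        congr 1 with t
        rw [← tsum_mul_left]
        exact tsum_congr fun k => by ring
    _ = ∑' k, ∫ t in Ioi 0, F k t :=
        (integral_tsum_of_summable_integral_norm hint (by simpa only [hnorm] using hsum)).symm
    _ = ∑' k, c k * ((1 / s) ^ a k * Gamma (a k)) := by
        simp only [F, integral_const_mul, hlaplace]

lemma one_div_rpow_mul_add {s : ℝ} (hs : 0 < s) (α β : ℝ) (k : ℕ) :
    (1 / s) ^ (α * k + β) = (s ^ (-α)) ^ k * (1 / s ^ β) := by
  rw [rpow_add (by positivity), rpow_mul (by positivity), rpow_natCast, one_div,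
    inv_rpow hs.le, inv_rpow hs.le, ← rpow_neg hs.le, one_div]

theorem laplace_deriv_beta2_4ML_general (α₁ β₁ α₂ β₂ lam s : ℝ) (hα₁ : 0 < α₁) (hβ₁ : 0 < β₁)
    (hα₂ : 0 < α₂) (hs : 0 < s) :
    (∫ t in Set.Ioi (0 : ℝ), Real.exp (-(s * t)) *
        ∑' k : ℕ, (-(digamma (α₂ * k + β₂))) * lam ^ k *
          t ^ (α₁ * k + β₁ - 1) /
            (Real.Gamma (α₁ * k + β₁) * Real.Gamma (α₂ * k + β₂)))
      = -((1 / s ^ β₁) *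
          ∑' k : ℕ, (digamma (α₂ * k + β₂) / Real.Gamma (α₂ * k + β₂)) *
            (lam * s ^ (-α₁)) ^ k) := by
  set a : ℕ → ℝ := fun k => α₁ * k + β₁
  set c : ℕ → ℝ := fun k =>
    -digamma (α₂ * k + β₂) * lam ^ k / (Gamma (a k) * Gamma (α₂ * k + β₂))
  have ha (k : ℕ) : 0 < a k := by positivity
  have hterm (k : ℕ) : c k * ((1 / s) ^ a k * Gamma (a k)) = -(1 / s ^ β₁) *
      (digamma (α₂ * k + β₂) / Gamma (α₂ * k + β₂) * (lam * s ^ (-α₁)) ^ k) := by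
    simp only [c, a, one_div_rpow_mul_add hs, mul_pow]
    field_simp
  have hsum : Summable fun k => |c k| * ((1 / s) ^ a k * Gamma (a k)) := by
    refine ((summable_digamma_div_Gamma_mul_pow hα₂ β₂ (lam * s ^ (-α₁))).mul_left
      (-(1 / s ^ β₁))).abs.congr fun k => ?_
    have hpos : 0 < (1 / s) ^ a k * Gamma (a k) := by have := ha k; positivity
    rw [← hterm, abs_mul, abs_of_pos hpos]
  calc _ = ∫ t in Ioi 0, exp (-(s * t)) * ∑' k, c k * t ^ (a k - 1) := by
        congr 1 with t
        exact congrArg _ (tsum_congr fun k => by ring)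
    _ = ∑' k, c k * ((1 / s) ^ a k * Gamma (a k)) := integral_exp_neg_mul_tsum_rpow hs ha hsum
    _ = _ := by rw [tsum_congr hterm, tsum_mul_left, neg_mul]

theorem laplace_deriv_beta2_4ML (α₁ β₁ α₂ β₂ lam s : ℝ) (hα₁ : 0 < α₁) (hβ₁ : 0 < β₁)
    (hα₂ : 0 < α₂) (hβ₂ : 0 < β₂) (hs : 0 < s) :
    (∫ t in Set.Ioi (0 : ℝ), Real.exp (-(s * t)) *
        ∑' k : ℕ, (-(digamma (α₂ * k + β₂))) * lam ^ k *
          t ^ (α₁ * k + β₁ - 1) /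
            (Real.Gamma (α₁ * k + β₁) * Real.Gamma (α₂ * k + β₂)))
      = -((1 / s ^ β₁) *
          ∑' k : ℕ, (digamma (α₂ * k + β₂) / Real.Gamma (α₂ * k + β₂)) *
            (lam * s ^ (-α₁)) ^ k) :=
  laplace_deriv_beta2_4ML_general α₁ β₁ α₂ β₂ lam s hα₁ hβ₁ hα₂ hs
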